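/- arXiv:1406.4345 — 11 statements merged into one kernel-verified Lean document; each statement's English description precedes it below -/
import Mathlib

section
/- Let X be a nonempty set, let n ≥ 1 be an integer, and let F : X^n → X be an n-ary operation with diagonal section δ_F : X → X defined by δ_F(u) = F(u,…,u). Then F is range-idempotent (i.e., δ_F ∘ F = F) if and only if F is quasi-range-idempotent (i.e., ran(δ_F) = ran(F)) and δ_F ∘ δ_F = δ_F. -/
/-! Since `ran δ_F ⊆ ran F` always holds, both sides say that `δ_F` fixes `ran F` pointwise. -/

theorem forall_apply_eq_iff_range_eq_and_idempotent {α X : Type*} {F : α → X} {g : X → X}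
    (hg : Set.range g ⊆ Set.range F) :
    (∀ x, g (F x) = F x) ↔ Set.range g = Set.range F ∧ ∀ u, g (g u) = g u := by
  constructor
  · intro hfix
    refine ⟨hg.antisymm ?_, fun u => ?_⟩
    · rintro _ ⟨x, rfl⟩
      exact ⟨F x, hfix x⟩
    · obtain ⟨x, hx⟩ := hg ⟨u, rfl⟩
      rw [← hx, hfix]
  · rintro ⟨hrange, hidem⟩ x
    obtain ⟨u, hu⟩ : F x ∈ Set.range g := hrange ▸ ⟨x, rfl⟩
    rw [← hu, hidem]

theorem stmt_0_general {X : Type*} (n : ℕ)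
    (F : (Fin n → X) → X) :
    (∀ x : Fin n → X, F (fun _ => F x) = F x) ↔
      (Set.range (fun u : X => F (fun _ => u)) = Set.range F ∧
        ∀ u : X, F (fun _ => F (fun _ : Fin n => u)) = F (fun _ : Fin n => u)) :=
  forall_apply_eq_iff_range_eq_and_idempotent (g := fun u => F fun _ => u)
    (Set.range_comp_subset_range _ F)

/-- For `F : Xⁿ → X` (n ≥ 1, X nonempty) with diagonal section
`δ_F u = F (u,…,u)`:  `F` is range-idempotent (`δ_F ∘ F = F`) iff `F` is
quasi-range-idempotent (`ran δ_F = ran F`) and `δ_F ∘ δ_F = δ_F`. -/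
theorem stmt_0 {X : Type*} [Nonempty X] (n : ℕ) (hn : 1 ≤ n)
    (F : (Fin n → X) → X) :
    (∀ x : Fin n → X, F (fun _ => F x) = F x) ↔
      (Set.range (fun u : X => F (fun _ => u)) = Set.range F ∧
        ∀ u : X, F (fun _ => F (fun _ : Fin n => u)) = F (fun _ : Fin n => u)) :=
  stmt_0_general n F
end

section
/- Let X and Y be nonempty sets, let n ≥ 1 be an integer, and let F : X^n → Y be a quasi-range-idempotent function. For any quasi-inverse g of δ_F, the n-ary operation H : X^n → X defined by H = g ∘ F is range-idempotent (δ_H ∘ H = H) and satisfies F = δ_F ∘ H; moreover, the restriction of δ_F to ran(H) is injective. -/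
/-!
Quasi-range-idempotence puts every value `F x` in the range of `δ_F`, on which `g` is a right
inverse of `δ_F`; hence `δ_F (g (F x)) = F x`, and all three claims follow from this identity.
-/

/-- `g` is a quasi-inverse of `f`: `f (g b) = b` for every `b ∈ ran f`, and
`g (ran f) = ran g`. -/
def QuasiInv {α β : Type*} (f : α → β) (g : β → α) : Prop :=
  (∀ b ∈ Set.range f, f (g b) = b) ∧ g '' Set.range f = Set.range g

open Set

namespace QuasiInv

variable {α β γ : Type*} {f : α → β} {g : β → α}

theorem rightInvOn (hg : QuasiInv f g) : RightInvOn g f (range f) := hg.1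

theorem injOn_image_range (hg : QuasiInv f g) : InjOn f (g '' range f) :=
  LeftInvOn.rightInvOn_image hg.rightInvOn |>.injOn

theorem apply_apply_of_range_subset (hg : QuasiInv f g) {F : γ → β} (hF : range F ⊆ range f)
    (x : γ) : f (g (F x)) = F x :=
  hg.rightInvOn.eq (hF (mem_range_self x))

theorem injOn_range_comp (hg : QuasiInv f g) {F : γ → β} (hF : range F ⊆ range f) :
    InjOn f (range (g ∘ F)) :=
  hg.injOn_image_range.mono (range_comp g F ▸ image_mono hF)

end QuasiInv

theorem stmt_1_general {X Y : Type*} (n : ℕ)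
    (F : (Fin n → X) → Y)
    (hqri : Set.range (fun u : X => F (fun _ => u)) = Set.range F)
    (g : Y → X) (hg : QuasiInv (fun u : X => F (fun _ => u)) g) :
    (∀ x : Fin n → X, g (F (fun _ => g (F x))) = g (F x)) ∧
    (∀ x : Fin n → X, F (fun _ => g (F x)) = F x) ∧
    Set.InjOn (fun u : X => F (fun _ => u)) (Set.range fun x : Fin n → X => g (F x)) := by
  have diag_comp : ∀ x, F (fun _ => g (F x)) = F x :=
    hg.apply_apply_of_range_subset hqri.ge
  exact ⟨fun x => congrArg g (diag_comp x), diag_comp, hg.injOn_range_comp hqri.ge⟩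

/-- If `F : Xⁿ → Y` (n ≥ 1) is quasi-range-idempotent and `g` is a
quasi-inverse of `δ_F`, then `H = g ∘ F` is range-idempotent (`δ_H ∘ H = H`),
satisfies `F = δ_F ∘ H`, and `δ_F` restricted to `ran H` is injective. -/
theorem stmt_1 {X Y : Type*} [Nonempty X] [Nonempty Y] (n : ℕ) (hn : 1 ≤ n)
    (F : (Fin n → X) → Y)
    (hqri : Set.range (fun u : X => F (fun _ => u)) = Set.range F)
    (g : Y → X) (hg : QuasiInv (fun u : X => F (fun _ => u)) g) :
    (∀ x : Fin n → X, g (F (fun _ => g (F x))) = g (F x)) ∧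
    (∀ x : Fin n → X, F (fun _ => g (F x)) = F x) ∧
    Set.InjOn (fun u : X => F (fun _ => u)) (Set.range fun x : Fin n → X => g (F x)) :=
  stmt_1_general n F hqri g hg
end

section
/- Let X be a nonempty set, let F : X* → X ∪ {ε} be a B-associative operation such that F(x) ∈ X for every nonempty string x ∈ X*, and let n ≥ 1 be an integer. If the diagonal section δ_{F_n} is injective, then δ_{F_n} = id, i.e., F(u^n) = u for every u ∈ X. -/
/-! Taking `x = z = ε` in B-associativity gives `F (F(y)^{|y|}) = F y`; for `y = uⁿ` this
says `δ (δ u) = δ u` for the diagonal section `δ` of `F_n`, and injectivity of `δ`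
cancels the outer `δ`. -/

/-- `RepStr F y` is the string `F(y)^{|y|}`: `|y|` copies of `F y` if `F y ∈ X`,
and the empty string if `F y = ε` (here `ε` is encoded by `none`). -/
def RepStr {X : Type*} (F : List X → Option X) (y : List X) : List X :=
  match F y with
  | some a => List.replicate y.length a
  | none => []

/-- `F` is barycentrically associative. -/
def BAssoc {X : Type*} (F : List X → Option X) : Prop :=
  ∀ x y z : List X, F (x ++ y ++ z) = F (x ++ RepStr F y ++ z)

/-- `F` is ε-standard: `F x = ε` iff `x = ε`. -/
def EpsStd {X : Type*} (F : List X → Option X) : Prop :=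
  ∀ x : List X, F x = none ↔ x = []

/-- `F` is barycentrically preassociative. -/
def BPreassoc {X Y : Type*} (F : List X → Y) : Prop :=
  ∀ x y y' z : List X, y.length = y'.length → F y = F y' →
    F (x ++ y ++ z) = F (x ++ y' ++ z)

/-- `F` is arity-wise range-idempotent: `F (F(x)^{|x|}) = F x`. -/
def AWRI {X : Type*} (F : List X → Option X) : Prop :=
  ∀ x : List X, F (RepStr F x) = F x

/-- `F` is arity-wise quasi-range-idempotent: `ran δ_{F_n} = ran F_n` for all `n ≥ 1`. -/
def AWQRI {X Y : Type*} (F : List X → Y) : Prop :=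
  ∀ n : ℕ, 1 ≤ n →
    Set.range (fun u : X => F (List.replicate n u)) = F '' {l : List X | l.length = n}

theorem repStr_of_eq_some {X : Type*} {F : List X → Option X} {y : List X} {a : X}
    (h : F y = some a) : RepStr F y = List.replicate y.length a := by
  simp [RepStr, h]

theorem BAssoc.awri {X : Type*} {F : List X → Option X} (h : BAssoc F) : AWRI F :=
  fun y => by simpa using (h [] y []).symm

theorem AWRI.apply_replicate_of_eq_some {X : Type*} {F : List X → Option X} (h : AWRI F)
    {n : ℕ} {u a : X} (ha : F (List.replicate n u) = some a) :
    F (List.replicate n a) = some a := by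
  simpa [repStr_of_eq_some ha, ha] using h (List.replicate n u)

theorem stmt_3_general {X : Type*} (F : List X → Option X)
    (hBA : BAssoc F)
    (hX : ∀ x : List X, x ≠ [] → (F x).isSome)
    (n : ℕ) (hn : 1 ≤ n)
    (hinj : Function.Injective fun u : X => F (List.replicate n u)) :
    ∀ u : X, F (List.replicate n u) = some u := by
  intro u
  obtain ⟨a, ha⟩ := Option.isSome_iff_exists.mp
    (hX (List.replicate n u) (by simp [List.replicate_eq_nil_iff]; omega))
  have hfix := hBA.awri.apply_replicate_of_eq_some ha
  rwa [hinj (hfix.trans ha.symm)] at ha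

/-- If `F : X* → X ∪ {ε}` is B-associative with `F x ∈ X` for
every nonempty string `x`, and `δ_{F_n}` is injective for some `n ≥ 1`, then
`δ_{F_n} = id`, i.e. `F (uⁿ) = u` for every `u ∈ X`. -/
theorem stmt_3 {X : Type*} [Nonempty X] (F : List X → Option X)
    (hBA : BAssoc F)
    (hX : ∀ x : List X, x ≠ [] → (F x).isSome)
    (n : ℕ) (hn : 1 ≤ n)
    (hinj : Function.Injective fun u : X => F (List.replicate n u)) :
    ∀ u : X, F (List.replicate n u) = some u :=
  stmt_3_general F hBA hX n hn hinj
end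

section
/- Let X be a nonempty set and let F : X* → X ∪ {ε} be an operation. The following assertions are equivalent: (i) F is B-associative; (ii) for all strings x, y, z, x', y', z' ∈ X* such that xyz = x'y'z' (as strings), F(x F(y)^{|y|} z) = F(x' F(y')^{|y'|} z'); (iii) for all strings x, y, z ∈ X*, F(F(xy)^{|xy|} z) = F(x F(yz)^{|yz|}); (iv) for all strings x, y ∈ X*, F(xy) = F(F(x)^{|x|} F(y)^{|y|}). -/
/-!
Write `R y` for `F(y)^{|y|}`. The implications (i) ⇒ (ii) ⇒ (iii) ⇒ (iv) follow by setting strings to `ε`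
and chaining. For (iv) ⇒ (i), taking `y = ε` in (iv) gives `F (R x) = F x`, and (iv) itself
says that `F (x y)` depends only on `F x`, `F y`, `|x|` and `|y|`; in particular `F` is
B-preassociative. When `F y ∈ X`, B-associativity follows because `R y` has the length and the
value of `y`. When `F y = ε`, the block `y` can be moved to the end, where it is absorbed.
-/

section RepStr

variable {X : Type*} {F : List X → Option X}

@[simp]
lemma repStr_nil (F : List X → Option X) : RepStr F [] = [] := by
  unfold RepStr; cases F [] <;> rfl

lemma repStr_eq_nil {y : List X} (h : F y = none) : RepStr F y = [] := by
  unfold RepStr; rw [h]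

lemma length_repStr {y : List X} {a : X} (h : F y = some a) :
    (RepStr F y).length = y.length := by
  unfold RepStr; rw [h]; simp

lemma repStr_congr {y y' : List X} (hF : F y = F y') (hlen : y.length = y'.length) :
    RepStr F y = RepStr F y' := by
  unfold RepStr; rw [hF, hlen]

end RepStr

section ApplyAppend

variable {X : Type*} {F : List X → Option X}
  (h : ∀ x y : List X, F (x ++ y) = F (RepStr F x ++ RepStr F y))
include h

lemma awri_of_apply_append : AWRI F := fun x => by
  simpa using (h x []).symm

lemma apply_append_congr_of_apply_append {x x' y y' : List X} (hx : F x = F x')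
    (hxl : x.length = x'.length) (hy : F y = F y') (hyl : y.length = y'.length) :
    F (x ++ y) = F (x' ++ y') := by
  rw [h x, h x', repStr_congr hx hxl, repStr_congr hy hyl]

lemma bPreassoc_of_apply_append : BPreassoc F := by
  intro x y y' z hlen hF
  have hyz : F (y ++ z) = F (y' ++ z) :=
    apply_append_congr_of_apply_append h hF hlen rfl rfl
  simp only [List.append_assoc]
  exact apply_append_congr_of_apply_append h rfl rfl hyz (by simp [hlen])

lemma apply_append_of_apply_eq_none {x y : List X} (hy : F y = none) : F (x ++ y) = F x := by
  rw [h, repStr_eq_nil hy, List.append_nil, awri_of_apply_append h]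

lemma bAssoc_of_apply_append : BAssoc F := by
  intro x y z
  have hpre := bPreassoc_of_apply_append h
  cases hy : F y with
  | some a =>
    exact hpre x y (RepStr F y) z (length_repStr hy).symm (awri_of_apply_append h y).symm
  | none =>
    have hswap : F (y ++ z) = F (z ++ y) := by
      rw [h y, h z, repStr_eq_nil hy, List.nil_append, List.append_nil]
    calc F (x ++ y ++ z) = F (x ++ (y ++ z) ++ []) := by simp
      _ = F (x ++ (z ++ y) ++ []) := hpre x _ _ [] (by simp [Nat.add_comm]) hswap
      _ = F (x ++ z ++ y) := by simp
      _ = F (x ++ RepStr F y ++ z) := by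
        rw [apply_append_of_apply_eq_none h hy, repStr_eq_nil hy, List.append_nil]

end ApplyAppend

theorem stmt_4_general {X : Type*} (F : List X → Option X) :
    List.TFAE
      [BAssoc F,
       ∀ x y z x' y' z' : List X, x ++ y ++ z = x' ++ y' ++ z' →
          F (x ++ RepStr F y ++ z) = F (x' ++ RepStr F y' ++ z'),
       ∀ x y z : List X, F (RepStr F (x ++ y) ++ z) = F (x ++ RepStr F (y ++ z)),
       ∀ x y : List X, F (x ++ y) = F (RepStr F x ++ RepStr F y)] := by
  tfae_have 1 → 2 := fun h x y z x' y' z' heq => by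
    rw [← h x y z, heq, h x' y' z']
  tfae_have 2 → 3 := fun h x y z => by
    simpa using h [] (x ++ y) z x (y ++ z) [] (by simp)
  tfae_have 3 → 4 := fun h x y => by
    have awri : AWRI F := fun w => by simpa using h w [] []
    have hright : F (RepStr F (x ++ y)) = F (x ++ RepStr F y) := by simpa using h x y []
    have hleft : F (RepStr F x ++ RepStr F y) = F (RepStr F (x ++ RepStr F y)) := by
      simpa using h [] x (RepStr F y)
    rw [hleft, awri, ← hright, awri]
  tfae_have 4 → 1 := bAssoc_of_apply_append
  tfae_finish

/-- Equivalent definitions of B-associativity. -/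
theorem stmt_4 {X : Type*} [Nonempty X] (F : List X → Option X) :
    List.TFAE
      [BAssoc F,
       ∀ x y z x' y' z' : List X, x ++ y ++ z = x' ++ y' ++ z' →
          F (x ++ RepStr F y ++ z) = F (x' ++ RepStr F y' ++ z'),
       ∀ x y z : List X, F (RepStr F (x ++ y) ++ z) = F (x ++ RepStr F (y ++ z)),
       ∀ x y : List X, F (x ++ y) = F (RepStr F x ++ RepStr F y)] :=
  stmt_4_general F
end

section
/- Let X be a nonempty set and let F, G : X* → X ∪ {ε} be two B-associative ε-standard operations such that, for every integer k ≥ 0, δ^r_{F_k} = δ^r_{G_k} or δ^ℓ_{F_k} = δ^ℓ_{G_k}. Then F = G. -/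
/-- `DeltaREq F G k` says `δʳ_{F_k} = δʳ_{G_k}` (with the conventions
`δʳ_{F_0} = F_0` and `δʳ_{F_1} = F_1`); for `k ≥ 2`,
`δʳ_{F_k}(u,v) = F (u^{k-1} v)`. -/
def DeltaREq {X Y : Type*} (F G : List X → Y) : ℕ → Prop
  | 0 => F [] = G []
  | 1 => ∀ u : X, F [u] = G [u]
  | (n + 2) => ∀ u v : X,
      F (List.replicate (n + 1) u ++ [v]) = G (List.replicate (n + 1) u ++ [v])

/-- `DeltaLEq F G k` says `δˡ_{F_k} = δˡ_{G_k}` (with the conventions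
`δˡ_{F_0} = F_0` and `δˡ_{F_1} = F_1`); for `k ≥ 2`,
`δˡ_{F_k}(u,v) = F (u v^{k-1})`. -/
def DeltaLEq {X Y : Type*} (F G : List X → Y) : ℕ → Prop
  | 0 => F [] = G []
  | 1 => ∀ u : X, F [u] = G [u]
  | (n + 2) => ∀ u v : X,
      F (u :: List.replicate (n + 1) v) = G (u :: List.replicate (n + 1) v)

/-! Induction on the length of the string. Once `F` and `G` agree on `y` of length `k - 1`,
B-associativity lets both replace `y` by `F(y)^{k-1}` inside `y v`, so `F (y v)` and `G (y v)`
become values of `δʳ_{F_k}` and `δʳ_{G_k}`; symmetrically for `u y` and `δˡ`. If instead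
`F y = ε`, the replacement deletes `y` and the claim drops to arity one. -/

section

variable {X : Type*} {F G : List X → Option X}

theorem repStr_congr_s6 {y : List X} (hy : F y = G y) : RepStr F y = RepStr G y := by
  simp only [RepStr, hy]

theorem BAssoc.eq_of_eq_repStr (hF : BAssoc F) (hG : BAssoc G) {x y z : List X}
    (hy : F y = G y) (h : F (x ++ RepStr F y ++ z) = G (x ++ RepStr F y ++ z)) :
    F (x ++ y ++ z) = G (x ++ y ++ z) := by
  rw [hF x y z, hG x y z, ← repStr_congr_s6 hy, h]

theorem BAssoc.eq_append_singleton (hF : BAssoc F) (hG : BAssoc G) {n : ℕ} {y : List X}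
    (hyn : y.length = n + 1) (hy : F y = G y) (hk : DeltaREq F G (n + 2))
    (h₁ : ∀ v, F [v] = G [v]) (v : X) : F (y ++ [v]) = G (y ++ [v]) := by
  have h : F (RepStr F y ++ [v]) = G (RepStr F y ++ [v]) := by
    cases hFy : F y with
    | none => simpa [RepStr, hFy] using h₁ v
    | some a => simpa [RepStr, hFy, hyn] using hk a v
  simpa using hF.eq_of_eq_repStr hG (x := []) (z := [v]) hy (by simpa using h)

theorem BAssoc.eq_cons (hF : BAssoc F) (hG : BAssoc G) {n : ℕ} {y : List X}
    (hyn : y.length = n + 1) (hy : F y = G y) (hk : DeltaLEq F G (n + 2))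
    (h₁ : ∀ u, F [u] = G [u]) (u : X) : F (u :: y) = G (u :: y) := by
  have h : F ([u] ++ RepStr F y) = G ([u] ++ RepStr F y) := by
    cases hFy : F y with
    | none => simpa [RepStr, hFy] using h₁ u
    | some a => simpa [RepStr, hFy, hyn] using hk u a
  simpa using hF.eq_of_eq_repStr hG (x := [u]) (z := []) hy (by simpa using h)

end

theorem stmt_6_general {X : Type*} (F G : List X → Option X)
    (hF : BAssoc F) (hG : BAssoc G)
    (h : ∀ k : ℕ, DeltaREq F G k ∨ DeltaLEq F G k) :
    F = G := by
  have h₁ : ∀ u, F [u] = G [u] := by rcases h 1 with h₁ | h₁ <;> exact h₁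
  funext x
  induction hx : x.length using Nat.strong_induction_on generalizing x with
  | _ n ih =>
    match n, x with
    | 0, [] => rcases h 0 with h₀ | h₀ <;> exact h₀
    | n + 1, [] => simp at hx
    | _, [u] => exact h₁ u
    | m + 2, u :: w :: y =>
      rcases h (m + 2) with hk | hk
      · obtain ⟨z, v, hzv⟩ := List.eq_nil_or_concat (u :: w :: y) |>.resolve_left (by simp)
        have hz : z.length = m + 1 := by simpa [hzv] using hx
        rw [hzv, List.concat_eq_append]
        exact hF.eq_append_singleton hG hz (ih _ (by omega) z hz) hk h₁ v
      · have hy : (w :: y).length = m + 1 := by simpa using hx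
        exact hF.eq_cons hG hy (ih _ (by omega) _ hy) hk h₁ u

/-- Two B-associative ε-standard operations which, for every
arity `k`, have the same `δʳ` or the same `δˡ`, coincide. -/
theorem stmt_6 {X : Type*} [Nonempty X] (F G : List X → Option X)
    (hF : BAssoc F) (hFs : EpsStd F) (hG : BAssoc G) (hGs : EpsStd G)
    (h : ∀ k : ℕ, DeltaREq F G k ∨ DeltaLEq F G k) :
    F = G :=
  stmt_6_general F G hF hG h
end

section
/- For every real number z and every integer n ≥ 1, the quantity Δ_n^z := Σ_{i=1}^n z^{n-i}(1-z)^{i-1} is nonzero, and the ε-standard operation M^z : ℝ* → ℝ ∪ {ε} defined by M^z_n(x₁,…,x_n) = (Σ_{i=1}^n z^{n-i}(1-z)^{i-1} x_i)/Δ_n^z for every n ≥ 1 is B-associative. -/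
/-- `Δ_n^z = ∑_{i=1}^n z^{n-i} (1-z)^{i-1}` (indexing shifted to `i ∈ range n`). -/
noncomputable def DeltaZ (z : ℝ) (n : ℕ) : ℝ :=
  ∑ i ∈ Finset.range n, z ^ (n - 1 - i) * (1 - z) ^ i

/-- The ε-standard operation `M^z` with
`M^z_n(x₁,…,x_n) = (∑_{i=1}^n z^{n-i}(1-z)^{i-1} x_i) / Δ_n^z`. -/
noncomputable def Mz (z : ℝ) (l : List ℝ) : Option ℝ :=
  if l = [] then none
  else some ((∑ i ∈ Finset.range l.length,
      z ^ (l.length - 1 - i) * (1 - z) ^ i * l.getD i 0) / DeltaZ z l.length)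

/-!
Writing `M^z(l) = S(l) / Δ_{|l|}` with the weighted sum `S(l) = ∑ z^{|l|-1-i} (1-z)^i l_i`,
the numerator satisfies `S(xy) = z^{|y|} S(x) + (1-z)^{|x|} S(y)`, so `M^z(xyw)` depends on
the middle block `y` only through `|y|` and `S(y)`. Replacing `y` by `|y|` copies of
`M^z(y)` preserves both, because `S(u^n) = Δ_n u`. That `Δ_n ≠ 0` is the geometric-sum
identity `((1-z) - z) Δ_n = (1-z)^n - z^n`: for `z ≠ 1/2` the bases have different absolute
values, and for `z = 1/2` all `n` terms equal `2^{1-n}`.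
-/

open Finset

noncomputable def weightedSum (z : ℝ) (l : List ℝ) : ℝ :=
  ∑ i ∈ range l.length, z ^ (l.length - 1 - i) * (1 - z) ^ i * l.getD i 0

lemma weightedSum_nil (z : ℝ) : weightedSum z [] = 0 := by
  simp [weightedSum]

lemma weightedSum_cons (z a : ℝ) (t : List ℝ) :
    weightedSum z (a :: t) = z ^ t.length * a + (1 - z) * weightedSum z t := by
  rw [weightedSum, weightedSum, List.length_cons, sum_range_succ', mul_sum, add_comm]
  congr 1
  · simp
  · refine sum_congr rfl fun i _ => ?_
    rw [List.getD_cons_succ, show t.length + 1 - 1 - (i + 1) = t.length - 1 - i by omega]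
    ring

lemma weightedSum_append (z : ℝ) (x y : List ℝ) :
    weightedSum z (x ++ y) =
      z ^ y.length * weightedSum z x + (1 - z) ^ x.length * weightedSum z y := by
  induction x with
  | nil => simp [weightedSum_nil]
  | cons a t ih =>
    rw [List.cons_append, weightedSum_cons, weightedSum_cons, ih, List.length_append,
      List.length_cons, pow_add, pow_succ]
    ring

lemma weightedSum_replicate (z u : ℝ) (n : ℕ) :
    weightedSum z (List.replicate n u) = DeltaZ z n * u := by
  rw [weightedSum, DeltaZ, sum_mul, List.length_replicate]
  exact sum_congr rfl fun i hi => by rw [List.getD_replicate u (mem_range.mp hi)]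

lemma DeltaZ_eq_geom_sum₂ (z : ℝ) (n : ℕ) :
    DeltaZ z n = ∑ i ∈ range n, (1 - z) ^ i * z ^ (n - 1 - i) := by
  simp only [DeltaZ, mul_comm]

lemma DeltaZ_ne_zero (z : ℝ) {n : ℕ} (hn : n ≠ 0) : DeltaZ z n ≠ 0 := by
  by_cases hz : 1 - z = z
  · rw [DeltaZ_eq_geom_sum₂, hz, geom_sum₂_self]
    have : z ≠ 0 := by linarith
    positivity
  · intro h0
    have hgeom := geom_sum₂_mul (1 - z) z n
    rw [← DeltaZ_eq_geom_sum₂, h0, zero_mul, eq_comm, sub_eq_zero,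
      pow_eq_pow_iff_of_ne_zero hn] at hgeom
    rcases hgeom with h | ⟨h, -⟩
    · exact hz h
    · linarith

lemma Mz_eq_ite (z : ℝ) (l : List ℝ) :
    Mz z l = if l = [] then none else some (weightedSum z l / DeltaZ z l.length) :=
  rfl

lemma epsStd_Mz (z : ℝ) : EpsStd (Mz z) := by
  intro l
  simp [Mz_eq_ite]

lemma Mz_congr {z : ℝ} {l l' : List ℝ} (hlen : l.length = l'.length)
    (hsum : weightedSum z l = weightedSum z l') : Mz z l = Mz z l' := by
  simp only [Mz_eq_ite, ← List.length_eq_zero_iff, hlen, hsum]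

lemma length_repStr_Mz (z : ℝ) (y : List ℝ) : (RepStr (Mz z) y).length = y.length := by
  rcases eq_or_ne y [] with rfl | hy
  · rfl
  · simp [RepStr, Mz_eq_ite, hy]

lemma weightedSum_repStr_Mz (z : ℝ) (y : List ℝ) :
    weightedSum z (RepStr (Mz z) y) = weightedSum z y := by
  rcases eq_or_ne y [] with rfl | hy
  · rfl
  · have hΔ : DeltaZ z y.length ≠ 0 := DeltaZ_ne_zero z (by simpa using hy)
    simp only [RepStr, Mz_eq_ite, hy, if_false, weightedSum_replicate]
    field_simp

lemma bAssoc_Mz (z : ℝ) : BAssoc (Mz z) := by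
  intro x y w
  apply Mz_congr
  · simp [length_repStr_Mz]
  · simp only [weightedSum_append, length_repStr_Mz, weightedSum_repStr_Mz, List.length_append]

/-- For every real `z` and `n ≥ 1`, `Δ_n^z ≠ 0`, and the
ε-standard operation `M^z` is B-associative. -/
theorem stmt_8 (z : ℝ) :
    (∀ n : ℕ, 1 ≤ n → DeltaZ z n ≠ 0) ∧ EpsStd (Mz z) ∧ BAssoc (Mz z) :=
  ⟨fun _ hn => DeltaZ_ne_zero z (Nat.one_le_iff_ne_zero.mp hn), epsStd_Mz z, bAssoc_Mz z⟩
end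

section
/- Let X, Y, Y' be nonempty sets, let F : X* → Y be B-preassociative, and for every n ≥ 1 let g_n : Y → Y' be a function whose restriction to ran(F_n) is injective. Then any function H : X* → Y' satisfying H_n = g_n ∘ F_n for every n ≥ 1 is B-preassociative. -/
theorem BPreassoc.of_eq_iff_eq_of_length_eq {X Y Z : Type*} {F : List X → Y} {H : List X → Z}
    (hF : BPreassoc F) (hHF : ∀ y y' : List X, y.length = y'.length → (H y = H y' ↔ F y = F y')) :
    BPreassoc H := by
  intro x y y' z hlen hHy
  have hlen' : (x ++ y ++ z).length = (x ++ y' ++ z).length := by simp [hlen]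
  exact (hHF _ _ hlen').2 (hF x y y' z hlen ((hHF y y' hlen).1 hHy))

theorem stmt_11_general {X Y Y' : Type*}
    (F : List X → Y) (hF : BPreassoc F)
    (g : ℕ → Y → Y')
    (hg : ∀ n : ℕ, 1 ≤ n → Set.InjOn (g n) (F '' {l : List X | l.length = n}))
    (H : List X → Y')
    (hH : ∀ n : ℕ, 1 ≤ n → ∀ l : List X, l.length = n → H l = g n (F l)) :
    BPreassoc H := by
  refine hF.of_eq_iff_eq_of_length_eq (fun y y' hlen => ?_)
  rcases Nat.eq_zero_or_pos y.length with hy | hy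
  · simp only [List.length_eq_zero_iff.mp hy, List.length_eq_zero_iff.mp (hlen.symm.trans hy)]
  · rw [hH _ hy y rfl, hH _ hy y' hlen.symm]
    exact (hg _ hy).eq_iff ⟨y, rfl, rfl⟩ ⟨y', hlen.symm, rfl⟩

/-- Left composition: If `F : X* → Y` is B-preassociative and
each `g_n : Y → Y'` is injective on `ran F_n`, then any `H : X* → Y'` with
`H_n = g_n ∘ F_n` for every `n ≥ 1` is B-preassociative. -/
theorem stmt_11 {X Y Y' : Type*} [Nonempty X] [Nonempty Y] [Nonempty Y']
    (F : List X → Y) (hF : BPreassoc F)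
    (g : ℕ → Y → Y')
    (hg : ∀ n : ℕ, 1 ≤ n → Set.InjOn (g n) (F '' {l : List X | l.length = n}))
    (H : List X → Y')
    (hH : ∀ n : ℕ, 1 ≤ n → ∀ l : List X, l.length = n → H l = g n (F l)) :
    BPreassoc H :=
  stmt_11_general F hF g hg H hH
end

section
/- Let X and Y be nonempty sets, let F : X* → Y be B-preassociative, and let k ≥ 2 be an integer. If for all letters x, z ∈ X the function X^k → Y, y ↦ F(xyz), is symmetric, then for all letters x, z ∈ X the function X^{k+1} → Y, y ↦ F(xyz), is symmetric. -/
/-!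
B-preassociativity lets one rewrite a window `x' y z'` of length `k + 2` inside a longer
string, so symmetry of `x y z` in `y ∈ X^k` gives symmetry of `x y z` in `y ∈ X^{k+1}` both
under the permutations fixing the first letter of `y` (window starting at its first letter)
and under those fixing its last letter (window ending at it). Since `k ≥ 2`, the latter
contain the swap of the first two letters, and together the two families generate every
permutation.
-/

namespace BPreassoc

variable {X Y : Type*} {F : List X → Y}

theorem cons_congr (hF : BPreassoc F) (a : X) {y y' : List X}
    (hlen : y.length = y'.length) (h : F y = F y') : F (a :: y) = F (a :: y') := by
  simpa using hF [a] y y' [] hlen h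

theorem append_congr (hF : BPreassoc F) (z : List X) {y y' : List X}
    (hlen : y.length = y'.length) (h : F y = F y') : F (y ++ z) = F (y' ++ z) := by
  simpa using hF [] y y' z hlen h

end BPreassoc

theorem stmt_12_general {X Y : Type*}
    (F : List X → Y) (hF : BPreassoc F) (k : ℕ) (hk : 2 ≤ k)
    (hsym : ∀ x z : X, ∀ y y' : List X, y.length = k → y.Perm y' →
      F (x :: (y ++ [z])) = F (x :: (y' ++ [z]))) :
    ∀ x z : X, ∀ y y' : List X, y.length = k + 1 → y.Perm y' →
      F (x :: (y ++ [z])) = F (x :: (y' ++ [z])) := by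
  intro x z y y' hlen hperm
  induction hperm with
  | nil => rfl
  | @cons a l₁ l₂ hl =>
    have hl₁ : l₁.length = k := by simpa using hlen
    exact hF.cons_congr x (by simp [hl.length_eq]) (hsym a z l₁ l₂ hl₁ hl)
  | swap a b l =>
    obtain ⟨m, c, rfl⟩ : ∃ m c, l = m ++ [c] := by
      refine l.eq_nil_or_concat'.resolve_left ?_
      rintro rfl
      simp at hlen; omega
    have hm : (b :: a :: m).length = k := by simp at hlen ⊢; omega
    simpa using hF.append_congr [z] (by simp) (hsym x c _ _ hm (.swap a b m))
  | trans h₁ h₂ ih₁ ih₂ => exact (ih₁ hlen).trans (ih₂ (h₁.length_eq ▸ hlen))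

/-- Let `F : X* → Y` be B-preassociative and `k ≥ 2`.  If for all
letters `x, z` the map `y ∈ X^k ↦ F (x y z)` is symmetric, then for all letters
`x, z` the map `y ∈ X^{k+1} ↦ F (x y z)` is symmetric. -/
theorem stmt_12 {X Y : Type*} [Nonempty X] [Nonempty Y]
    (F : List X → Y) (hF : BPreassoc F) (k : ℕ) (hk : 2 ≤ k)
    (hsym : ∀ x z : X, ∀ y y' : List X, y.length = k → y.Perm y' →
      F (x :: (y ++ [z])) = F (x :: (y' ++ [z]))) :
    ∀ x z : X, ∀ y y' : List X, y.length = k + 1 → y.Perm y' →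
      F (x :: (y ++ [z])) = F (x :: (y' ++ [z])) :=
  stmt_12_general F hF k hk hsym
end

section
/- Let X and Y be nonempty sets and let F, G : X* → Y be B-preassociative and arity-wise quasi-range-idempotent functions such that, for every integer k ≥ 0, δ^r_{F_k} = δ^r_{G_k} or δ^ℓ_{F_k} = δ^ℓ_{G_k}. Then F = G. -/
/-!
Induction on the arity. Strings of length `0` and `1` are handled by the hypothesis directly.
For a string `x ++ [v]` with `|x| = n ≥ 1`, quasi-range-idempotence of `F` gives `u` with
`F (u^n) = F x`; by induction `G` also identifies `u^n` with `x`, so B-preassociativity replaces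
`x` by `u^n` on both sides, and `F (u^n v) = G (u^n v)` is `δʳ_{F_{n+1}} = δʳ_{G_{n+1}}`.
Strings `v :: x` are treated symmetrically with `δˡ`.
-/

section

variable {X Y : Type*} {F G : List X → Y}

namespace BPreassoc

theorem apply_append_right (hF : BPreassoc F) {y y' : List X} (hlen : y.length = y'.length)
    (hy : F y = F y') (z : List X) : F (y ++ z) = F (y' ++ z) := by
  simpa using hF [] y y' z hlen hy

theorem apply_append_left (hF : BPreassoc F) {y y' : List X} (hlen : y.length = y'.length)
    (hy : F y = F y') (x : List X) : F (x ++ y) = F (x ++ y') := by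
  simpa using hF x y y' [] hlen hy

end BPreassoc

theorem AWQRI.exists_apply_replicate_eq (hF : AWQRI F) {x : List X}
    (hx : x ≠ []) : ∃ u : X, F (List.replicate x.length u) = F x := by
  have hmem : F x ∈ F '' {l : List X | l.length = x.length} := ⟨x, rfl, rfl⟩
  rwa [← hF x.length (List.length_pos_iff.mpr hx)] at hmem

theorem exists_apply_replicate_eq_of_eqOn_length (hFq : AWQRI F) {x : List X} (hx : x ≠ [])
    (hFG : ∀ y : List X, y.length = x.length → F y = G y) :
    ∃ u : X, F (List.replicate x.length u) = F x ∧ G (List.replicate x.length u) = G x := by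
  obtain ⟨u, hu⟩ := hFq.exists_apply_replicate_eq hx
  refine ⟨u, hu, ?_⟩
  rw [← hFG _ List.length_replicate, ← hFG x rfl, hu]

theorem apply_append_singleton_eq (hF : BPreassoc F) (hG : BPreassoc G) (hFq : AWQRI F)
    {x : List X} (hx : x ≠ []) (hFG : ∀ y : List X, y.length = x.length → F y = G y)
    (hδ : ∀ u v : X, F (List.replicate x.length u ++ [v]) = G (List.replicate x.length u ++ [v]))
    (v : X) : F (x ++ [v]) = G (x ++ [v]) := by
  obtain ⟨u, hFu, hGu⟩ := exists_apply_replicate_eq_of_eqOn_length hFq hx hFG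
  have hlen : (List.replicate x.length u).length = x.length := List.length_replicate
  calc F (x ++ [v]) = F (List.replicate x.length u ++ [v]) :=
        (hF.apply_append_right hlen hFu [v]).symm
    _ = G (List.replicate x.length u ++ [v]) := hδ u v
    _ = G (x ++ [v]) := hG.apply_append_right hlen hGu [v]

theorem apply_cons_eq (hF : BPreassoc F) (hG : BPreassoc G) (hFq : AWQRI F)
    {x : List X} (hx : x ≠ []) (hFG : ∀ y : List X, y.length = x.length → F y = G y)
    (hδ : ∀ u v : X, F (u :: List.replicate x.length v) = G (u :: List.replicate x.length v))
    (v : X) : F (v :: x) = G (v :: x) := by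
  obtain ⟨u, hFu, hGu⟩ := exists_apply_replicate_eq_of_eqOn_length hFq hx hFG
  have hlen : (List.replicate x.length u).length = x.length := List.length_replicate
  calc F (v :: x) = F (v :: List.replicate x.length u) :=
        (hF.apply_append_left hlen hFu [v]).symm
    _ = G (v :: List.replicate x.length u) := hδ v u
    _ = G (v :: x) := hG.apply_append_left hlen hGu [v]

theorem eqOn_length_of_deltaREq_or_deltaLEq (hF : BPreassoc F) (hG : BPreassoc G)
    (hFq : AWQRI F) (h : ∀ k : ℕ, DeltaREq F G k ∨ DeltaLEq F G k) :
    ∀ (n : ℕ) (x : List X), x.length = n → F x = G x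
  | 0, [], _ => (h 0).elim id id
  | 1, [u], _ => (h 1).elim (· u) (· u)
  | n + 2, x, hx => by
    have hIH := eqOn_length_of_deltaREq_or_deltaLEq hF hG hFq h (n + 1)
    rcases h (n + 2) with hδ | hδ
    · obtain ⟨y, v, rfl⟩ := x.eq_nil_or_concat'.resolve_left (by rintro rfl; simp at hx)
      have hy : y.length = n + 1 := by simpa using hx
      exact apply_append_singleton_eq hF hG hFq (List.ne_nil_of_length_pos (by omega))
        (fun z hz => hIH z (hz.trans hy)) (hy ▸ hδ) v
    · obtain _ | ⟨v, y⟩ := x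
      · simp at hx
      have hy : y.length = n + 1 := by simpa using hx
      exact apply_cons_eq hF hG hFq (List.ne_nil_of_length_pos (by omega))
        (fun z hz => hIH z (hz.trans hy)) (hy ▸ hδ) v

end

theorem stmt_13_general {X Y : Type*} (F G : List X → Y)
    (hF : BPreassoc F) (hFq : AWQRI F) (hG : BPreassoc G)
    (h : ∀ k : ℕ, DeltaREq F G k ∨ DeltaLEq F G k) :
    F = G :=
  funext fun x => eqOn_length_of_deltaREq_or_deltaLEq hF hG hFq h x.length x rfl

/-- Two B-preassociative and arity-wise quasi-range-idempotent
functions which, for every arity `k`, have the same `δʳ` or the same `δˡ`,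
coincide. -/
theorem stmt_13 {X Y : Type*} [Nonempty X] [Nonempty Y] (F G : List X → Y)
    (hF : BPreassoc F) (hFq : AWQRI F) (hG : BPreassoc G) (hGq : AWQRI G)
    (h : ∀ k : ℕ, DeltaREq F G k ∨ DeltaLEq F G k) :
    F = G :=
  stmt_13_general F G hF hFq hG h
end

section
/- Let X and Y be nonempty sets and let F : X* → Y be a function such that δ_{F_n} is injective for every n ≥ 1. The following assertions are equivalent: (i) F is B-preassociative and arity-wise quasi-range-idempotent; (ii) there exists a B-associative and idempotent ε-standard operation H : X* → X ∪ {ε} (i.e., H(u^n) = u for every u ∈ X and n ≥ 1) such that F_n = δ_{F_n} ∘ H_n for every n ≥ 1. -/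
/-!
With injective diagonal sections, `F` on strings of a fixed length `n` is determined by, and
determines, any `H` with `F_n = δ_{F_n} ∘ H_n`: for strings `l, l'` of equal length,
`F l = F l' ↔ H l = H l'`. Under this correspondence B-associativity of `H` is exactly
B-preassociativity of `F`, because replacing `y` by `H(y)^{|y|}` does not change `F y`.
Quasi-range-idempotence of `F` is what lets one define such an `H` at all, by picking for each
nonempty `l` a letter `u` with `F (u^{|l|}) = F l`.
-/

section

open List

variable {X Y : Type*}

theorem EpsStd.exists_eq_some {H : List X → Option X} (hE : EpsStd H) {l : List X}
    (hl : l ≠ []) : ∃ a, H l = some a :=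
  Option.ne_none_iff_exists'.1 fun h => hl ((hE l).1 h)

theorem EpsStd.length_repStr {H : List X → Option X} (hE : EpsStd H) (y : List X) :
    (RepStr H y).length = y.length := by
  rcases eq_or_ne y [] with rfl | hy
  · simp [RepStr, (hE []).2 rfl]
  · obtain ⟨a, ha⟩ := hE.exists_eq_some hy
    simp [RepStr, ha]

section Factorization

variable {F : List X → Y} {H : List X → Option X}
  (hinj : ∀ n : ℕ, 1 ≤ n → Function.Injective fun u : X => F (replicate n u))
  (hE : EpsStd H) (hfac : ∀ l a, H l = some a → F l = F (replicate l.length a))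
include hE hfac

theorem apply_repStr_of_factor (y : List X) : F (RepStr H y) = F y := by
  rcases eq_or_ne y [] with rfl | hy
  · simp [RepStr, (hE []).2 rfl]
  · obtain ⟨a, ha⟩ := hE.exists_eq_some hy
    simp [RepStr, ha, hfac y a ha]

theorem awqri_of_factor : AWQRI F := by
  intro n hn
  ext b
  constructor
  · rintro ⟨u, rfl⟩
    exact ⟨replicate n u, length_replicate, rfl⟩
  · rintro ⟨l, rfl, rfl⟩
    obtain ⟨a, ha⟩ := hE.exists_eq_some (ne_nil_of_length_pos hn)
    exact ⟨a, (hfac l a ha).symm⟩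

include hinj

theorem apply_eq_apply_iff_of_factor {l l' : List X} (hlen : l.length = l'.length) :
    F l = F l' ↔ H l = H l' := by
  rcases eq_or_ne l [] with rfl | hl
  · rw [length_nil, eq_comm, length_eq_zero_iff] at hlen
    simp [hlen]
  obtain ⟨a, ha⟩ := hE.exists_eq_some hl
  obtain ⟨b, hb⟩ := hE.exists_eq_some (ne_nil_of_length_pos (hlen ▸ length_pos_of_ne_nil hl))
  rw [ha, hb, hfac l a ha, hfac l' b hb, ← hlen, Option.some_inj]
  exact (hinj _ (length_pos_of_ne_nil hl)).eq_iff

theorem apply_replicate_of_factor {n : ℕ} (hn : 1 ≤ n) (u : X) :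
    H (replicate n u) = some u := by
  obtain ⟨a, ha⟩ := hE.exists_eq_some (ne_nil_of_length_pos (l := replicate n u) (by simpa))
  rw [ha, Option.some_inj]
  exact hinj n hn (by simpa using (hfac _ a ha).symm)

theorem bAssoc_iff_bPreassoc_of_factor : BAssoc H ↔ BPreassoc F := by
  have hlen {x y y' z : List X} (h : y.length = y'.length) :
      (x ++ y ++ z).length = (x ++ y' ++ z).length := by simp [h]
  constructor
  · intro hBA x y y' z hyy' hF
    have hR : RepStr H y = RepStr H y' := by
      unfold RepStr
      rw [(apply_eq_apply_iff_of_factor hinj hE hfac hyy').1 hF, hyy']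
    rw [apply_eq_apply_iff_of_factor hinj hE hfac (hlen hyy'), hBA, hR, ← hBA]
  · intro hpre x y z
    have hyR := (hE.length_repStr y).symm
    rw [← apply_eq_apply_iff_of_factor hinj hE hfac (hlen hyR)]
    exact hpre x y _ z hyR (apply_repStr_of_factor hE hfac y).symm

end Factorization

section DiagonalPreimage

open Classical in
noncomputable def diagonalPreimage (F : List X → Y) (l : List X) : Option X :=
  if h : l ≠ [] ∧ ∃ u, F (replicate l.length u) = F l then some h.2.choose else none

variable {F : List X → Y}

theorem apply_eq_of_diagonalPreimage_eq_some {l : List X} {a : X}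
    (h : diagonalPreimage F l = some a) : F l = F (replicate l.length a) := by
  unfold diagonalPreimage at h
  split_ifs at h with hl
  rw [← Option.some_inj.1 h]
  exact hl.2.choose_spec.symm

theorem epsStd_diagonalPreimage (hq : AWQRI F) : EpsStd (diagonalPreimage F) := by
  intro l
  rcases eq_or_ne l [] with rfl | hl
  · simp [diagonalPreimage]
  have hex : ∃ u, F (replicate l.length u) = F l := by
    rw [← Set.mem_range, hq _ (length_pos_of_ne_nil hl)]
    exact ⟨l, rfl, rfl⟩
  simp [diagonalPreimage, hl, hex]

end DiagonalPreimage

end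

theorem stmt_17_general {X Y : Type*} (F : List X → Y)
    (hinj : ∀ n : ℕ, 1 ≤ n →
      Function.Injective fun u : X => F (List.replicate n u)) :
    (BPreassoc F ∧ AWQRI F) ↔
      (∃ H : List X → Option X, BAssoc H ∧ EpsStd H ∧
        (∀ n : ℕ, 1 ≤ n → ∀ u : X, H (List.replicate n u) = some u) ∧
        (∀ n : ℕ, 1 ≤ n → ∀ l : List X, l.length = n → ∀ a : X,
          H l = some a → F l = F (List.replicate n a))) := by
  constructor
  · rintro ⟨hpre, hq⟩
    have hE := epsStd_diagonalPreimage hq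
    have hfac l a := @apply_eq_of_diagonalPreimage_eq_some _ _ F l a
    refine ⟨diagonalPreimage F, (bAssoc_iff_bPreassoc_of_factor hinj hE hfac).2 hpre, hE,
      fun n hn => apply_replicate_of_factor hinj hE hfac hn, ?_⟩
    rintro n - l rfl a ha
    exact hfac l a ha
  · rintro ⟨H, hBA, hE, -, hcomp⟩
    have hfac (l : List X) (a : X) (ha : H l = some a) : F l = F (List.replicate l.length a) := by
      refine hcomp _ (List.length_pos_of_ne_nil fun hl => ?_) l rfl a ha
      simp [(hE l).2 hl] at ha
    exact ⟨(bAssoc_iff_bPreassoc_of_factor hinj hE hfac).1 hBA, awqri_of_factor hE hfac⟩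

/-- Let `F : X* → Y` have injective diagonal sections `δ_{F_n}`
for all `n ≥ 1`.  Then `F` is B-preassociative and arity-wise
quasi-range-idempotent iff there is a B-associative, idempotent, ε-standard
operation `H` with `F_n = δ_{F_n} ∘ H_n` for every `n ≥ 1`. -/
theorem stmt_17 {X Y : Type*} [Nonempty X] [Nonempty Y] (F : List X → Y)
    (hinj : ∀ n : ℕ, 1 ≤ n →
      Function.Injective fun u : X => F (List.replicate n u)) :
    (BPreassoc F ∧ AWQRI F) ↔
      (∃ H : List X → Option X, BAssoc H ∧ EpsStd H ∧
        (∀ n : ℕ, 1 ≤ n → ∀ u : X, H (List.replicate n u) = some u) ∧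
        (∀ n : ℕ, 1 ≤ n → ∀ l : List X, l.length = n → ∀ a : X,
          H l = some a → F l = F (List.replicate n a))) :=
  stmt_17_general F hinj
end

section
/- Let I ⊆ ℝ be a nontrivial real interval (an order-convex set containing at least two points), possibly unbounded. Let f, g : I → ℝ be continuous and strictly monotonic functions and, for every n ≥ 1, let f_n, g_n : ℝ → ℝ be continuous and strictly monotonic functions. Then f_n((1/n)·Σ_{i=1}^n f(x_i)) = g_n((1/n)·Σ_{i=1}^n g(x_i)) for every n ≥ 1 and all x₁,…,x_n ∈ I if and only if there exist real numbers r, s with r ≠ 0 such that g(x) = r·f(x) + s for every x ∈ I and f_n(t) = g_n(r·t + s) for every n ≥ 1 and every t in the image f(I). -/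
/-!
Putting `n` copies of one point into the equation gives `fₙ ∘ f = gₙ ∘ g` on `I`; putting `k`
copies of `y` and `n - k` copies of `x` and cancelling the injective `gₙ` then shows that
`φ = g ∘ f⁻¹` commutes with every rational convex combination of two points of the interval
`f(I)`. A monotone function with this property is affine, because its value at a real convex
combination is squeezed between its values at nearby rational ones. Conversely, the average of
points of the interval `f(I)` stays in `f(I)`, where `fₙ = gₙ ∘ (r · id + s)`.
-/

open Set Function

def RatAffineOn (φ : ℝ → ℝ) (J : Set ℝ) : Prop :=
  ∀ u ∈ J, ∀ v ∈ J, ∀ q : ℚ, 0 ≤ q → q ≤ 1 → φ (u + q * (v - u)) = φ u + q * (φ v - φ u)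

theorem eq_mul_of_rat_squeeze {t D E : ℝ} (ht : t ∈ Icc (0 : ℝ) 1)
    (hlow : ∀ q : ℚ, 0 ≤ q → (q : ℝ) ≤ t → q * D ≤ E)
    (hhigh : ∀ q : ℚ, t ≤ q → q ≤ 1 → E ≤ q * D) : E = t * D := by
  have hE : 0 ≤ E := by simpa using hlow 0 le_rfl (by simpa using ht.1)
  have hED : E ≤ D := by simpa using hhigh 1 (by simpa using ht.2) le_rfl
  rcases (hE.trans hED).eq_or_lt with hD | hD
  · subst hD; linarith
  rw [← div_eq_iff hD.ne']
  apply le_antisymm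
  · refine le_of_forall_lt_rat_imp_le fun q htq => ?_
    rcases le_or_gt q 1 with hq1 | hq1
    · exact (div_le_iff₀ hD).2 (hhigh q htq.le hq1)
    · exact ((div_le_one hD).2 hED).trans (by exact_mod_cast hq1.le)
  · refine le_of_forall_rat_lt_imp_le fun q hqt => ?_
    rcases lt_or_ge q 0 with hq0 | hq0
    · exact (by exact_mod_cast hq0.le : (q : ℝ) ≤ 0).trans (div_nonneg hE hD.le)
    · exact (le_div_iff₀ hD).2 (hlow q hq0 hqt.le)

theorem RatAffineOn.collinear_of_monotoneOn {φ : ℝ → ℝ} {J : Set ℝ} (hφ : RatAffineOn φ J)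
    (hJ : J.OrdConnected) (hmono : MonotoneOn φ J) {x z : ℝ} (hx : x ∈ J) (hz : z ∈ J)
    {y : ℝ} (hy : y ∈ Icc x z) : (φ y - φ x) * (z - x) = (y - x) * (φ z - φ x) := by
  rcases (hy.1.trans hy.2).eq_or_lt with rfl | hxz
  · obtain rfl : y = x := le_antisymm hy.2 hy.1
    ring
  have hyJ : y ∈ J := hJ.out hx hz hy
  set t := (y - x) / (z - x) with ht
  have hyt : y = x + t * (z - x) := by rw [ht]; field_simp; ring
  have ht01 : t ∈ Icc (0 : ℝ) 1 := ⟨div_nonneg (by linarith [hy.1]) (by linarith),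
    (div_le_one (by linarith)).2 (by linarith [hy.2])⟩
  have hpt : ∀ q : ℚ, 0 ≤ q → q ≤ 1 → x + q * (z - x) ∈ J := fun q hq0 hq1 => by
    have hq0' : (0 : ℝ) ≤ q := by exact_mod_cast hq0
    have hq1' : (q : ℝ) ≤ 1 := by exact_mod_cast hq1
    exact hJ.out hx hz ⟨by nlinarith, by nlinarith⟩
  have key := eq_mul_of_rat_squeeze (D := φ z - φ x) (E := φ y - φ x) ht01
    (fun q hq0 hqt => ?_) (fun q htq hq1 => ?_)
  · rw [key, ht]; field_simp
  · have hq1 : q ≤ 1 := by exact_mod_cast hqt.trans ht01.2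
    have := hmono (hpt q hq0 hq1) hyJ (by rw [hyt]; gcongr)
    rw [hφ x hx z hz q hq0 hq1] at this
    linarith
  · have hq0 : 0 ≤ q := by exact_mod_cast ht01.1.trans htq
    have := hmono hyJ (hpt q hq0 hq1) (by rw [hyt]; gcongr)
    rw [hφ x hx z hz q hq0 hq1] at this
    linarith

theorem exists_affine_of_collinear {φ : ℝ → ℝ} {J : Set ℝ}
    (hcol : ∀ x ∈ J, ∀ z ∈ J, ∀ y ∈ Icc x z, (φ y - φ x) * (z - x) = (y - x) * (φ z - φ x)) :
    ∃ r s : ℝ, ∀ y ∈ J, φ y = r * y + s := by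
  by_cases h : ∃ a ∈ J, ∃ b ∈ J, a < b
  · obtain ⟨a, ha, b, hb, hab⟩ := h
    refine ⟨(φ b - φ a) / (b - a), φ a - (φ b - φ a) / (b - a) * a, fun y hy => ?_⟩
    have hcol' : (φ y - φ a) * (b - a) = (y - a) * (φ b - φ a) := by
      rcases le_total y a with hya | hay
      · linear_combination -hcol y hy b hb a ⟨hya, hab.le⟩
      rcases le_total y b with hyb | hby
      · exact hcol a ha b hb y ⟨hay, hyb⟩
      · linear_combination -hcol a ha y hy b ⟨hab.le, hby⟩
    field_simp [sub_ne_zero.2 hab.ne']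
    linear_combination hcol'
  · push Not at h
    rcases J.eq_empty_or_nonempty with rfl | ⟨c, hc⟩
    · exact ⟨0, 0, by simp⟩
    · exact ⟨0, φ c, fun y hy => by rw [le_antisymm (h y hy c hc) (h c hc y hy)]; ring⟩

theorem RatAffineOn.neg {φ : ℝ → ℝ} {J : Set ℝ} (hφ : RatAffineOn φ J) : RatAffineOn (-φ) J :=
  fun u hu v hv q hq0 hq1 => by simp only [Pi.neg_apply, hφ u hu v hv q hq0 hq1]; ring

theorem RatAffineOn.exists_affine {φ : ℝ → ℝ} {J : Set ℝ} (hφ : RatAffineOn φ J)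
    (hJ : J.OrdConnected) (hmono : MonotoneOn φ J ∨ AntitoneOn φ J) :
    ∃ r s : ℝ, ∀ y ∈ J, φ y = r * y + s := by
  rcases hmono with hmono | hanti
  · exact exists_affine_of_collinear fun x hx z hz y hy =>
      hφ.collinear_of_monotoneOn hJ hmono hx hz hy
  · obtain ⟨r, s, h⟩ := exists_affine_of_collinear fun x hx z hz y hy =>
      hφ.neg.collinear_of_monotoneOn hJ hanti.neg hx hz hy
    exact ⟨-r, -s, fun y hy => by linarith [show -φ y = r * y + s from h y hy]⟩

theorem Convex.inv_length_smul_sum_mem {E : Type*} [AddCommGroup E] [Module ℝ E] {s : Set E}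
    (hs : Convex ℝ s) {l : List E} (hl : l ≠ []) (h : ∀ x ∈ l, x ∈ s) :
    (l.length : ℝ)⁻¹ • l.sum ∈ s := by
  have := hs.centerMass_mem (t := Finset.univ) (w := fun _ : Fin l.length => (1 : ℝ)) (z := l.get)
    (fun _ _ => zero_le_one) (by simpa using List.length_pos_iff.2 hl)
    (fun i _ => h _ (List.get_mem l i))
  simpa [Finset.centerMass, ← List.sum_ofFn] using this

theorem sum_map_replicate_append_div (h : ℝ → ℝ) (x y : ℝ) {k n : ℕ} (hkn : k ≤ n)
    (hn : n ≠ 0) :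
    ((List.replicate k y ++ List.replicate (n - k) x).map h).sum / n
      = h x + k / n * (h y - h x) := by
  simp only [List.map_append, List.map_replicate, List.sum_append, List.sum_replicate,
    nsmul_eq_mul, Nat.cast_sub hkn]
  field_simp
  ring

def MeansAgreeOn (I : Set ℝ) (f g : ℝ → ℝ) (fn gn : ℕ → ℝ → ℝ) : Prop :=
  ∀ n : ℕ, 1 ≤ n → ∀ l : List ℝ, l.length = n → (∀ a ∈ l, a ∈ I) →
    fn n ((l.map f).sum / (n : ℝ)) = gn n ((l.map g).sum / (n : ℝ))

theorem MeansAgreeOn.apply_eq {I : Set ℝ} {f g : ℝ → ℝ} {fn gn : ℕ → ℝ → ℝ}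
    (H : MeansAgreeOn I f g fn gn) {n : ℕ} (hn : 1 ≤ n) {x : ℝ} (hx : x ∈ I) :
    fn n (f x) = gn n (g x) := by
  have hn0 : (n : ℝ) ≠ 0 := by positivity
  simpa [List.sum_replicate, hn0] using H n hn (List.replicate n x) List.length_replicate
    fun a ha => (List.eq_of_mem_replicate ha) ▸ hx

theorem comp_invFunOn_apply {I : Set ℝ} {f g : ℝ → ℝ} (hinj : InjOn f I) {x : ℝ} (hx : x ∈ I) :
    (g ∘ invFunOn f I) (f x) = g x :=
  congrArg g (hinj.leftInvOn_invFunOn hx)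

theorem MeansAgreeOn.ratAffineOn_comp_invFunOn {I : Set ℝ} {f g : ℝ → ℝ} {fn gn : ℕ → ℝ → ℝ}
    (H : MeansAgreeOn I f g fn gn) (hJ : (f '' I).OrdConnected) (hinj : InjOn f I)
    (hgn : ∀ n : ℕ, 1 ≤ n → Injective (gn n)) :
    RatAffineOn (g ∘ invFunOn f I) (f '' I) := by
  rintro _ ⟨x, hx, rfl⟩ _ ⟨y, hy, rfl⟩ q hq0 hq1
  lift q to ℚ≥0 using hq0
  have hq : ((q : ℚ) : ℝ) = q.num / q.den := NNRat.cast_def q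
  have hn : 1 ≤ q.den := q.den_pos
  have hkn : q.num ≤ q.den := by
    have : (q.num : ℝ) / q.den ≤ 1 := hq ▸ (by exact_mod_cast hq1)
    exact_mod_cast (div_le_one (by positivity)).1 this
  obtain ⟨w, hw, hfw⟩ : f x + ((q : ℚ) : ℝ) * (f y - f x) ∈ f '' I :=
    hJ.convex.add_smul_sub_mem (mem_image_of_mem f hx) (mem_image_of_mem f hy)
      ⟨by positivity, (by exact_mod_cast hq1 : ((q : ℚ) : ℝ) ≤ 1)⟩
  have hmean := H q.den hn (List.replicate q.num y ++ List.replicate (q.den - q.num) x)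
    (by simp only [List.length_append, List.length_replicate]; omega) (by
      simp only [List.mem_append, List.mem_replicate]
      rintro a (⟨-, rfl⟩ | ⟨-, rfl⟩) <;> assumption)
  rw [sum_map_replicate_append_div f x y hkn (by omega),
    sum_map_replicate_append_div g x y hkn (by omega), ← hq, ← hfw, H.apply_eq hn hw] at hmean
  rw [← hfw, comp_invFunOn_apply hinj hw, comp_invFunOn_apply hinj hx, comp_invFunOn_apply hinj hy]
  exact hgn _ hn hmean

theorem monotoneOn_or_antitoneOn_comp_invFunOn {I : Set ℝ} {f g : ℝ → ℝ}
    (hfm : StrictMonoOn f I ∨ StrictAntiOn f I) (hgm : StrictMonoOn g I ∨ StrictAntiOn g I) :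
    MonotoneOn (g ∘ invFunOn f I) (f '' I) ∨ AntitoneOn (g ∘ invFunOn f I) (f '' I) := by
  have hinj : InjOn f I := hfm.elim StrictMonoOn.injOn StrictAntiOn.injOn
  obtain h | h : (∀ x ∈ I, ∀ y ∈ I, f x ≤ f y → g x ≤ g y) ∨
      (∀ x ∈ I, ∀ y ∈ I, f x ≤ f y → g y ≤ g x) := by
    rcases hfm with hf | hf <;> rcases hgm with hg | hg
    · exact .inl fun x hx y hy h => (hg.le_iff_le hx hy).2 ((hf.le_iff_le hx hy).1 h)
    · exact .inr fun x hx y hy h => (hg.le_iff_ge hy hx).2 ((hf.le_iff_le hx hy).1 h)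
    · exact .inr fun x hx y hy h => (hg.le_iff_le hy hx).2 ((hf.le_iff_ge hx hy).1 h)
    · exact .inl fun x hx y hy h => (hg.le_iff_ge hx hy).2 ((hf.le_iff_ge hx hy).1 h)
  · left
    rintro _ ⟨x, hx, rfl⟩ _ ⟨y, hy, rfl⟩ hxy
    rw [comp_invFunOn_apply hinj hx, comp_invFunOn_apply hinj hy]
    exact h x hx y hy hxy
  · right
    rintro _ ⟨x, hx, rfl⟩ _ ⟨y, hy, rfl⟩ hxy
    rw [comp_invFunOn_apply hinj hx, comp_invFunOn_apply hinj hy]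
    exact h x hx y hy hxy

theorem meansAgreeOn_of_affine {I : Set ℝ} {f g : ℝ → ℝ} {fn gn : ℕ → ℝ → ℝ} {r s : ℝ}
    (hJ : Convex ℝ (f '' I)) (hg : ∀ x ∈ I, g x = r * f x + s)
    (hfn : ∀ n : ℕ, 1 ≤ n → ∀ t ∈ f '' I, fn n t = gn n (r * t + s)) :
    MeansAgreeOn I f g fn gn := by
  intro n hn l hl hlI
  have hmean : (l.map f).sum / n ∈ f '' I := by
    have hl0 : l ≠ [] := List.ne_nil_of_length_pos (by omega)
    simpa [hl, div_eq_inv_mul] using hJ.inv_length_smul_sum_mem (l := l.map f)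
      (by simpa using hl0) (by simpa using fun x hx => mem_image_of_mem f (hlI x hx))
  have hsum : (l.map g).sum = r * (l.map f).sum + n * s := by
    rw [List.map_congr_left fun x hx => hg x (hlI x hx)]
    simp [List.sum_map_add, List.sum_map_mul_left, hl]
  rw [hfn n hn _ hmean, hsum]
  field_simp

theorem stmt_19_general (I : Set ℝ) (hconv : I.OrdConnected)
    (hnontriv : ∃ a b : ℝ, a ∈ I ∧ b ∈ I ∧ a ≠ b)
    (f g : ℝ → ℝ)
    (hf : ContinuousOn f I) (hfm : StrictMonoOn f I ∨ StrictAntiOn f I)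
    (hgm : StrictMonoOn g I ∨ StrictAntiOn g I)
    (fn gn : ℕ → ℝ → ℝ)
    (hgn : ∀ n : ℕ, 1 ≤ n →
      Continuous (gn n) ∧ (StrictMono (gn n) ∨ StrictAnti (gn n))) :
    (∀ n : ℕ, 1 ≤ n → ∀ l : List ℝ, l.length = n → (∀ a ∈ l, a ∈ I) →
        fn n ((l.map f).sum / (n : ℝ)) = gn n ((l.map g).sum / (n : ℝ)))
    ↔
    (∃ r s : ℝ, r ≠ 0 ∧ (∀ x ∈ I, g x = r * f x + s) ∧
      ∀ n : ℕ, 1 ≤ n → ∀ t ∈ f '' I, fn n t = gn n (r * t + s)) := by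
  have hinj : InjOn f I := hfm.elim StrictMonoOn.injOn StrictAntiOn.injOn
  have hJ : (f '' I).OrdConnected := (hconv.isPreconnected.image f hf).ordConnected
  refine ⟨fun (H : MeansAgreeOn I f g fn gn) => ?_,
    fun ⟨r, s, _, hgf, hfn⟩ => meansAgreeOn_of_affine hJ.convex hgf hfn⟩
  have hgn_inj n hn : Injective (gn n) :=
    (hgn n hn).2.elim StrictMono.injective StrictAnti.injective
  obtain ⟨r, s, hrs⟩ := (H.ratAffineOn_comp_invFunOn hJ hinj hgn_inj).exists_affine hJ
    (monotoneOn_or_antitoneOn_comp_invFunOn hfm hgm)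
  have hgf : ∀ x ∈ I, g x = r * f x + s := fun x hx => by
    rw [← comp_invFunOn_apply (g := g) hinj hx, hrs _ (mem_image_of_mem f hx)]
  obtain ⟨a, b, ha, hb, hab⟩ := hnontriv
  refine ⟨r, s, fun hr => hab (hgm.elim StrictMonoOn.injOn StrictAntiOn.injOn ha hb ?_), hgf, ?_⟩
  · rw [hgf a ha, hgf b hb, hr, zero_mul, zero_mul]
  · rintro n hn _ ⟨x, hx, rfl⟩
    rw [H.apply_eq hn hx, hgf x hx]

/-- Let `I ⊆ ℝ` be a nontrivial interval, `f, g : I → ℝ`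
continuous and strictly monotonic, and for every `n ≥ 1` let
`f_n, g_n : ℝ → ℝ` be continuous and strictly monotonic.  Then
`f_n((1/n) ∑ f xᵢ) = g_n((1/n) ∑ g xᵢ)` for all `n ≥ 1` and all
`x₁,…,x_n ∈ I` iff there are reals `r ≠ 0` and `s` with `g = r·f + s` on `I`
and `f_n t = g_n (r·t + s)` for every `n ≥ 1` and every `t ∈ f(I)`. -/
theorem stmt_19 (I : Set ℝ) (hconv : I.OrdConnected)
    (hnontriv : ∃ a b : ℝ, a ∈ I ∧ b ∈ I ∧ a ≠ b)
    (f g : ℝ → ℝ)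
    (hf : ContinuousOn f I) (hfm : StrictMonoOn f I ∨ StrictAntiOn f I)
    (hg : ContinuousOn g I) (hgm : StrictMonoOn g I ∨ StrictAntiOn g I)
    (fn gn : ℕ → ℝ → ℝ)
    (hfn : ∀ n : ℕ, 1 ≤ n →
      Continuous (fn n) ∧ (StrictMono (fn n) ∨ StrictAnti (fn n)))
    (hgn : ∀ n : ℕ, 1 ≤ n →
      Continuous (gn n) ∧ (StrictMono (gn n) ∨ StrictAnti (gn n))) :
    (∀ n : ℕ, 1 ≤ n → ∀ l : List ℝ, l.length = n → (∀ a ∈ l, a ∈ I) →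
        fn n ((l.map f).sum / (n : ℝ)) = gn n ((l.map g).sum / (n : ℝ)))
    ↔
    (∃ r s : ℝ, r ≠ 0 ∧ (∀ x ∈ I, g x = r * f x + s) ∧
      ∀ n : ℕ, 1 ≤ n → ∀ t ∈ f '' I, fn n t = gn n (r * t + s)) :=
  stmt_19_general I hconv hnontriv f g hf hfm hgm fn gn hgn
end
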